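/- arXiv:2402.08586 — 3 statements merged into one kernel-verified Lean document; each statement's English description precedes it below -/
import Mathlib

section
/- Let T_full be a tree ensemble over ℝ^d, let F_S ⊆ {1,…,d} be a set of selected features, let x ∈ ℝ^d be an anchor example, and let T_prun = Prune(T_full, F_S, x). Then for every x̃ ∈ ℝ^d such that x̃_f = x_f for every feature f ∉ F_S, the raw outputs coincide, T_prun(x̃) = T_full(x̃), and hence the predicted labels of T_prun and T_full on x̃ coincide. In particular T_prun(x) = T_full(x). -/
open scoped Classical

/-- A binary decision tree over ℝ^d: either a leaf carrying a real output value,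
or an internal node with a feature index, a threshold, and two subtrees. -/
inductive DTree (d : ℕ) : Type where
  | leaf : ℝ → DTree d
  | node : Fin d → ℝ → DTree d → DTree d → DTree d

/-- Evaluation of a decision tree on an example. -/
noncomputable def DTree.eval {d : ℕ} : DTree d → (Fin d → ℝ) → ℝ
  | .leaf v, _ => v
  | .node f t L R, x => if x f < t then L.eval x else R.eval x

/-- Pruning a tree with respect to a set of selected features `FS` and anchor example `x`:
splits on selected features are kept; splits on non-selected features are replaced by the
branch that `x` follows. -/
noncomputable def DTree.prune {d : ℕ} (FS : Set (Fin d)) (x : Fin d → ℝ) : DTree d → DTree d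
  | .leaf v => .leaf v
  | .node f t L R =>
    if f ∈ FS then .node f t (L.prune FS x) (R.prune FS x)
    else if x f < t then L.prune FS x else R.prune FS x

/-- The raw output of a tree ensemble: the sum of the evaluations of its trees. -/
noncomputable def rawOutput {d : ℕ} (T : List (DTree d)) (x : Fin d → ℝ) : ℝ :=
  (T.map fun t => t.eval x).sum

/-- The predicted label of a tree ensemble: +1 if the raw output is positive, -1 otherwise. -/
noncomputable def label {d : ℕ} (T : List (DTree d)) (x : Fin d → ℝ) : ℤ :=
  if 0 < rawOutput T x then 1 else -1

/-- Pruning an ensemble: prune each of its trees. -/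
noncomputable def pruneEnsemble {d : ℕ} (T : List (DTree d)) (FS : Set (Fin d))
    (x : Fin d → ℝ) : List (DTree d) :=
  T.map (DTree.prune FS x)


lemma DTree.prune_eval {d : ℕ} (FS : Set (Fin d)) (x : Fin d → ℝ) (T : DTree d)
    (xt : Fin d → ℝ) (h : ∀ f : Fin d, f ∉ FS → xt f = x f) :
    (T.prune FS x).eval xt = T.eval xt := by
  induction T with
  | leaf v => rfl
  | node f t L R ihL ihR =>
    by_cases hf : f ∈ FS
    · simp [DTree.prune, DTree.eval, hf, ihL, ihR]
    · simp only [DTree.prune, hf, if_false]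
      by_cases hlt : x f < t <;> simp [DTree.eval, hlt, ihL, ihR, h f hf]

/-- for a tree ensemble, the pruned ensemble has the same raw output
(hence the same predicted label) as the full ensemble on every example `xt` that agrees
with the anchor `x` on all non-selected features; in particular on `x` itself. -/
theorem pruned_ensemble_eval_eq {d : ℕ} (Tfull : List (DTree d)) (FS : Set (Fin d))
    (x : Fin d → ℝ) (Tprun : List (DTree d)) (hprun : Tprun = pruneEnsemble Tfull FS x) :
    (∀ xt : Fin d → ℝ, (∀ f : Fin d, f ∉ FS → xt f = x f) →
      rawOutput Tprun xt = rawOutput Tfull xt ∧ label Tprun xt = label Tfull xt)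
    ∧ rawOutput Tprun x = rawOutput Tfull x := by
  subst hprun
  have key : ∀ xt : Fin d → ℝ, (∀ f : Fin d, f ∉ FS → xt f = x f) →
      rawOutput (pruneEnsemble Tfull FS x) xt = rawOutput Tfull xt := by
    intro xt h
    unfold rawOutput pruneEnsemble
    rw [List.map_map]
    congr 1
    exact List.map_congr_left fun t _ => DTree.prune_eval FS x t xt h
  refine ⟨fun xt h => ⟨key xt h, ?_⟩, key x (fun _ _ => rfl)⟩
  simp [label, key xt h]
end

section
/- (Proposition 3.1.) Let T_full be a tree ensemble over ℝ^d, let F_S ⊆ {1,…,d} be a set of selected features, let x ∈ ℝ^d, let δ > 0, and let T_prun = Prune(T_full, F_S, x). Suppose x̃ ∈ ℝ^d satisfies: x̃_f = x_f for every feature f ∉ F_S, ‖x − x̃‖_∞ < δ, and the predicted labels of T_prun on x and on x̃ differ. Then the predicted labels of T_full on x and on x̃ also differ; that is, x̃ is an adversarial example for x with respect to T_full and δ. -/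
open scoped Classical

/-- `xt` is an adversarial example for `x` with respect to the ensemble `T` and
maximum perturbation size `δ`: it is within ℓ∞-distance `δ` of `x` (the sup norm is the
norm of the pi type `Fin d → ℝ`) and the predicted labels differ. -/
def IsAdversarial {d : ℕ} (T : List (DTree d)) (x : Fin d → ℝ) (δ : ℝ) (xt : Fin d → ℝ) :
    Prop :=
  ‖x - xt‖ < δ ∧ label T x ≠ label T xt


lemma prune_eval_eq {d : ℕ} (FS : Set (Fin d)) (x y : Fin d → ℝ)
    (hy : ∀ f : Fin d, f ∉ FS → y f = x f) :
    ∀ t : DTree d, (t.prune FS x).eval y = t.eval y := by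
  intro t
  induction t with
  | leaf v => rfl
  | node f τ L R ihL ihR =>
    by_cases hf : f ∈ FS
    · simp [DTree.prune, DTree.eval, hf]
      split <;> simp [ihL, ihR]
    · have hyx : y f = x f := hy f hf
      simp [DTree.prune, DTree.eval, hf, hyx]
      split <;> simp [ihL, ihR]

lemma prune_label_eq {d : ℕ} (T : List (DTree d)) (FS : Set (Fin d)) (x y : Fin d → ℝ)
    (hy : ∀ f : Fin d, f ∉ FS → y f = x f) :
    label (pruneEnsemble T FS x) y = label T y := by
  have : rawOutput (pruneEnsemble T FS x) y = rawOutput T y := by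
    unfold rawOutput pruneEnsemble
    rw [List.map_map]
    congr 1
    apply List.map_congr_left
    intro t _
    exact prune_eval_eq FS x y hy t
  simp [label, this]

/-- Proposition 3.1: if `xt` agrees with `x` outside the selected features,
is within ℓ∞-distance `δ` of `x`, and the pruned ensemble's predicted labels on `x` and
`xt` differ, then the full ensemble's predicted labels on `x` and `xt` also differ, i.e.
`xt` is an adversarial example for `x` w.r.t. the full ensemble and `δ`. -/
theorem pruned_adversarial_is_adversarial {d : ℕ} (Tfull : List (DTree d))
    (FS : Set (Fin d)) (x : Fin d → ℝ) (δ : ℝ) (hδ : 0 < δ)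
    (Tprun : List (DTree d)) (hprun : Tprun = pruneEnsemble Tfull FS x)
    (xt : Fin d → ℝ) (hfix : ∀ f : Fin d, f ∉ FS → xt f = x f)
    (hdist : ‖x - xt‖ < δ) (hlab : label Tprun x ≠ label Tprun xt) :
    label Tfull x ≠ label Tfull xt ∧ IsAdversarial Tfull x δ xt := by
  have h1 : label Tprun x = label Tfull x := by
    rw [hprun]; exact prune_label_eq Tfull FS x x (fun f _ => rfl)
  have h2 : label Tprun xt = label Tfull xt := by
    rw [hprun]; exact prune_label_eq Tfull FS x xt hfix
  have hne : label Tfull x ≠ label Tfull xt := by rw [← h1, ← h2]; exact hlab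
  exact ⟨hne, hdist, hne⟩
end

section
/- Let T_full be a tree ensemble over ℝ^d, F_S ⊆ {1,…,d}, x ∈ ℝ^d, and T_prun = Prune(T_full, F_S, x). Let A_prun = { x̃ ∈ ℝ^d : x̃_f = x_f for all f ∉ F_S and the predicted labels of T_prun on x and x̃ differ } and A_full = { x̃ ∈ ℝ^d : the predicted labels of T_full on x and x̃ differ }. Then A_prun ⊆ A_full, and consequently the restricted empirical robustness overestimates the true empirical robustness: inf { ‖x − x̃‖_∞ : x̃ ∈ A_prun } ≥ inf { ‖x − x̃‖_∞ : x̃ ∈ A_full } (infima taken in [0, ∞]). -/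
open scoped Classical

open scoped ENNReal

/- Off the selected features a point `y` agrees with the anchor `x`, so at every pruned split
`y` takes the same branch as `x`, which is the branch the pruning kept. -/
theorem DTree.eval_prune {d : ℕ} {FS : Set (Fin d)} {x y : Fin d → ℝ}
    (hy : ∀ f, f ∉ FS → y f = x f) (t : DTree d) :
    (t.prune FS x).eval y = t.eval y := by
  induction t with
  | leaf v => rfl
  | node f τ L R ihL ihR =>
    by_cases hf : f ∈ FS
    · simp only [DTree.prune, DTree.eval, if_pos hf, ihL, ihR]
    · simp only [DTree.prune, DTree.eval, if_neg hf, hy f hf]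
      split_ifs <;> assumption

theorem rawOutput_pruneEnsemble {d : ℕ} {FS : Set (Fin d)} {x y : Fin d → ℝ}
    (hy : ∀ f, f ∉ FS → y f = x f) (T : List (DTree d)) :
    rawOutput (pruneEnsemble T FS x) y = rawOutput T y := by
  simp only [rawOutput, pruneEnsemble, List.map_map, Function.comp_def, DTree.eval_prune hy]

theorem label_pruneEnsemble {d : ℕ} {FS : Set (Fin d)} {x y : Fin d → ℝ}
    (hy : ∀ f, f ∉ FS → y f = x f) (T : List (DTree d)) :
    label (pruneEnsemble T FS x) y = label T y := by
  rw [label, label, rawOutput_pruneEnsemble hy]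

/-- the set of label-flipping perturbations available to the pruned search
is contained in the set of label-flipping perturbations of the full ensemble, and hence
the restricted empirical robustness (inf of ℓ∞ distances, taken in `[0,∞]`) overestimates
the true empirical robustness. -/
theorem pruned_empirical_robustness_ge {d : ℕ} (Tfull : List (DTree d))
    (FS : Set (Fin d)) (x : Fin d → ℝ)
    (Tprun : List (DTree d)) (hprun : Tprun = pruneEnsemble Tfull FS x)
    (Aprun Afull : Set (Fin d → ℝ))
    (hAprun : Aprun = {xt : Fin d → ℝ |
      (∀ f : Fin d, f ∉ FS → xt f = x f) ∧ label Tprun x ≠ label Tprun xt})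
    (hAfull : Afull = {xt : Fin d → ℝ | label Tfull x ≠ label Tfull xt}) :
    Aprun ⊆ Afull ∧
    sInf ((fun xt : Fin d → ℝ => (‖x - xt‖₊ : ℝ≥0∞)) '' Aprun) ≥
      sInf ((fun xt : Fin d → ℝ => (‖x - xt‖₊ : ℝ≥0∞)) '' Afull) := by
  suffices hsub : Aprun ⊆ Afull from ⟨hsub, sInf_le_sInf (Set.image_mono hsub)⟩
  subst hprun hAprun hAfull
  rintro y ⟨hy, hflip⟩
  rwa [label_pruneEnsemble hy, label_pruneEnsemble (fun _ _ => rfl)] at hflip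
end
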